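/- arXiv:2406.16313 — 7 statements merged into one kernel-verified Lean document; each statement's English description precedes it below -/
import Mathlib

section
/- Let (Sh, Rec, 𝒴) be an (ε₁,ε₂)-leakage-resilient secret sharing scheme for b-bit messages using d bits of randomness, and let 𝒵 = {Sh(U_b, y) : y ∈ {0,1}^d}. Fix functions f, g: {0,1}^ℓ → {0,1}^b and h: {0,1}^{2b} → {0,1}^m, and suppose that h(f(Z₁), g(Z₂)) ≈_{δ'} U_m for every (Z₁,Z₂) ∈ 𝒵. Then the function ext defined by ext(y) = h(f(L_y), g(R_y)), where (L_y, R_y) = Sh(0^b, y), satisfies ext(Y) ≈_δ U_m for every Y ∈ 𝒴, with δ = 2^b·ε₂ + δ'. -/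
open Finset
open scoped Classical

/-- Bit strings of length `n`. -/
abbrev BS (n : ℕ) : Type := Fin n → Bool

/-- `p` is a probability mass function on the finite type `S`. -/
def IsDist {S : Type*} [Fintype S] (p : S → ℝ) : Prop :=
  (∀ s, 0 ≤ p s) ∧ ∑ s, p s = 1

/-- Statistical distance between two distributions on `S`. -/
noncomputable def statDist {S : Type*} [Fintype S] (p q : S → ℝ) : ℝ :=
  (∑ s, |p s - q s|) / 2

/-- Pushforward of a distribution `p` on `S` along `f : S → T`. -/
noncomputable def push {S T : Type*} [Fintype S] [DecidableEq T] (f : S → T)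
    (p : S → ℝ) : T → ℝ :=
  fun t => ∑ s, if f s = t then p s else 0

/-- The uniform distribution on `{0,1}^m`. -/
noncomputable def unif (m : ℕ) : BS m → ℝ := fun _ => 1 / 2 ^ m

/-- `(Sh, Rec, 𝒴)` is an `(ε₁, ε₂)`-leakage-resilient secret sharing scheme
(a `(2,2,ε₁)`-secret sharing scheme with `ε₂`-leakage-resilience against one-bit local
leakage) for `b`-bit messages using `d` bits of randomness, with shares in `{0,1}^ℓ`. -/
def IsLRSS (b d ℓ : ℕ) (Sh : BS b → BS d → BS ℓ × BS ℓ)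
    (Rec : BS ℓ × BS ℓ → BS b) (𝒴 : Set (BS d → ℝ)) (ε₁ ε₂ : ℝ) : Prop :=
  (∀ Y ∈ 𝒴, IsDist Y) ∧
  -- correctness: with probability 1 over the randomness, both shares recover the secret
  (∀ Y ∈ 𝒴, ∀ x : BS b, ∀ y : BS d, 0 < Y y → Rec (Sh x y) = x) ∧
  -- secrecy: each single share (the only nontrivial unauthorized sets) hides the secret
  (∀ Y ∈ 𝒴, ∀ x x' : BS b,
    statDist (push (fun y => (Sh x y).1) Y) (push (fun y => (Sh x' y).1) Y) ≤ ε₁ ∧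
    statDist (push (fun y => (Sh x y).2) Y) (push (fun y => (Sh x' y).2) Y) ≤ ε₁) ∧
  -- leakage-resilience against one bit of local leakage from each share
  (∀ Y ∈ 𝒴, ∀ x x' : BS b, ∀ f g : BS ℓ → Bool,
    statDist (push (fun y => (f (Sh x y).1, g (Sh x y).2)) Y)
             (push (fun y => (f (Sh x' y).1, g (Sh x' y).2)) Y) ≤ ε₂)

/-- Concatenation of two `b`-bit strings into a `2b`-bit string. -/
def concat {b : ℕ} (u v : BS b) : BS (2 * b) :=
  fun i => Fin.append u v (Fin.cast (two_mul b) i)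

/-!
Let `P x` be the law of `h(f(Sh(x,Y)₁), g(Sh(x,Y)₂))`; it is a function of the pair of
`b`-bit leakages `(f(Sh₁), g(Sh₂))`. The indicator of `{f(Sh₁) = u, g(Sh₂) ∈ s}` is a product
of one-bit leakages of the two shares, so leakage resilience bounds the distance between the
laws of that pair under two secrets by `ε₂` per value `u`, i.e. by `2^b·ε₂` in total. Hence
every `P x` is `2^b·ε₂`-close to `P 0^b`, and so is their average over a uniform secret. By
Fubini that average is also the average over `y ∼ Y` of the modified distributions
`h(f(Z₁), g(Z₂))`, `Z = Sh(U_b, y)`, each of which is `δ'`-close to uniform.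
-/

section StatDist

variable {S : Type*} [Fintype S]

lemma statDist_triangle (p q r : S → ℝ) : statDist p r ≤ statDist p q + statDist q r := by
  unfold statDist
  rw [← add_div, ← sum_add_distrib]
  gcongr with s
  exact abs_sub_le (p s) (q s) (r s)

lemma abs_sub_le_statDist {p q : S → ℝ} (hpq : ∑ s, p s = ∑ s, q s) (s : S) :
    |p s - q s| ≤ statDist p q := by
  have hrest : p s - q s = -∑ t ∈ univ.erase s, (p t - q t) := by
    rw [eq_neg_iff_add_eq_zero]
    exact (add_sum_erase univ (fun t => p t - q t) (mem_univ s)).trans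
      (by rw [sum_sub_distrib, hpq, sub_self])
  have hle : |p s - q s| ≤ ∑ t ∈ univ.erase s, |p t - q t| := by
    rw [hrest, abs_neg]
    exact abs_sum_le_sum_abs _ _
  have htotal := add_sum_erase univ (fun t => |p t - q t|) (mem_univ s)
  unfold statDist
  linarith

lemma statDist_sum_smul_le {I : Type*} [Fintype I] {w : I → ℝ} (hw : IsDist w)
    {P Q : I → S → ℝ} {ε : ℝ} (hPQ : ∀ i, statDist (P i) (Q i) ≤ ε) :
    statDist (∑ i, w i • P i) (∑ i, w i • Q i) ≤ ε := by
  obtain ⟨hw_nonneg, hw_sum⟩ := hw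
  unfold statDist at hPQ ⊢
  rw [div_le_iff₀ two_pos]
  calc ∑ t, |(∑ i, w i • P i) t - (∑ i, w i • Q i) t|
      = ∑ t, |∑ i, w i * (P i t - Q i t)| := by
        simp only [Finset.sum_apply, Pi.smul_apply, smul_eq_mul, mul_sub, sum_sub_distrib]
    _ ≤ ∑ t, ∑ i, w i * |P i t - Q i t| := by
        gcongr with t
        refine (abs_sum_le_sum_abs _ _).trans_eq (sum_congr rfl fun i _ => ?_)
        rw [abs_mul, abs_of_nonneg (hw_nonneg i)]
    _ = ∑ i, w i * ∑ t, |P i t - Q i t| := by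
        rw [sum_comm]
        simp only [mul_sum]
    _ ≤ ∑ i, w i * (2 * ε) := by
        gcongr with i
        · exact hw_nonneg i
        · linarith [hPQ i]
    _ = ε * 2 := by rw [← sum_mul, hw_sum]; ring

end StatDist

section Push

variable {S T : Type*} [Fintype S] [DecidableEq T]

lemma sum_push [Fintype T] (φ : S → T) (p : S → ℝ) : ∑ t, push φ p t = ∑ s, p s := by
  unfold push
  rw [sum_comm]
  simp

lemma push_push {U : Type*} [Fintype T] [DecidableEq U] (ψ : S → T) (φ : T → U) (p : S → ℝ) :
    push φ (push ψ p) = push (fun s => φ (ψ s)) p := by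
  funext u
  unfold push
  simp_rw [← sum_filter]
  rw [← sum_fiberwise_of_maps_to (g := ψ) (t := univ.filter (φ · = u)) (by simp)]
  refine sum_congr rfl fun t ht => ?_
  rw [filter_filter]
  refine sum_congr (filter_congr fun s _ => ?_) fun _ _ => rfl
  rw [mem_filter] at ht
  exact ⟨fun h => ⟨by rw [h]; exact ht.2, h⟩, And.right⟩

lemma statDist_push_le [Fintype T] (φ : S → T) (p q : S → ℝ) :
    statDist (push φ p) (push φ q) ≤ statDist p q := by
  unfold statDist push
  gcongr
  calc ∑ t, |(∑ s, if φ s = t then p s else 0) - ∑ s, if φ s = t then q s else 0|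
      ≤ ∑ t, ∑ s, if φ s = t then |p s - q s| else 0 := by
        gcongr with t
        rw [← sum_sub_distrib]
        refine (abs_sum_le_sum_abs _ _).trans (sum_le_sum fun s _ => ?_)
        split_ifs <;> simp
    _ = ∑ s, |p s - q s| := by
        rw [sum_comm]
        simp

lemma sum_smul_push_comm {I J : Type*} [Fintype I] [Fintype J] (φ : I → J → T)
    (p : I → ℝ) (q : J → ℝ) :
    ∑ i, p i • push (φ i) q = ∑ j, q j • push (fun i => φ i j) p := by
  funext t
  simp only [Finset.sum_apply, Pi.smul_apply, smul_eq_mul, push, mul_sum]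
  rw [sum_comm]
  refine sum_congr rfl fun j _ => sum_congr rfl fun i _ => ?_
  split_ifs <;> ring

end Push

lemma sum_abs_le_of_forall_abs_sum_le {B : Type*} [Fintype B] {x : B → ℝ} {ε : ℝ}
    (h : ∀ s : Finset B, |∑ v ∈ s, x v| ≤ ε) : ∑ v, |x v| ≤ 2 * ε := by
  have hsplit : ∑ v, |x v| = ∑ v ∈ univ.filter (0 ≤ x ·), x v
      - ∑ v ∈ univ.filter (¬ 0 ≤ x ·), x v := by
    rw [← sum_filter_add_sum_filter_not univ (0 ≤ x ·), sub_eq_add_neg, ← sum_neg_distrib]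
    congr 1 <;> refine sum_congr rfl fun v hv => ?_
    · exact abs_of_nonneg (mem_filter.mp hv).2
    · exact abs_of_neg (not_le.mp (mem_filter.mp hv).2)
  have hpos := abs_le.mp (h (univ.filter (0 ≤ x ·)))
  have hneg := abs_le.mp (h (univ.filter (¬ 0 ≤ x ·)))
  linarith [hpos.2, hneg.1]

lemma statDist_le_card_mul_of_leakage {A B : Type*} [Fintype A] [Fintype B]
    {P Q : A × B → ℝ} (hPQ : ∑ s, P s = ∑ s, Q s) {ε : ℝ}
    (hleak : ∀ (fa : A → Bool) (gb : B → Bool),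
      statDist (push (Prod.map fa gb) P) (push (Prod.map fa gb) Q) ≤ ε) :
    statDist P Q ≤ Fintype.card A * ε := by
  have hrow : ∀ u : A, ∑ v, |P (u, v) - Q (u, v)| ≤ 2 * ε := by
    intro u
    refine sum_abs_le_of_forall_abs_sum_le fun s => ?_
    have hevent : ∀ R : A × B → ℝ,
        push (Prod.map (fun a => decide (a = u)) (fun v => decide (v ∈ s))) R (true, true)
          = ∑ v ∈ s, R (u, v) := by
      intro R
      simp [push, Fintype.sum_prod_type, Prod.ext_iff, ite_and, sum_ite_eq']
    rw [sum_sub_distrib, ← hevent P, ← hevent Q]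
    exact (abs_sub_le_statDist (by rw [sum_push, sum_push, hPQ]) _).trans (hleak _ _)
  unfold statDist
  rw [Fintype.sum_prod_type, div_le_iff₀ two_pos]
  calc ∑ u, ∑ v, |P (u, v) - Q (u, v)| ≤ ∑ _u : A, 2 * ε := sum_le_sum fun u _ => hrow u
    _ = Fintype.card A * ε * 2 := by simp; ring

lemma isDist_unif (b : ℕ) : IsDist (unif b) :=
  ⟨fun _ => by unfold unif; positivity, by simp [unif]⟩

/-- If `h(f(Z₁), g(Z₂))` is `δ'`-close to uniform for every distribution
`(Z₁,Z₂) = Sh(U_b, y)` with `y ∈ {0,1}^d`, then `ext(y) = h(f(L_y), g(R_y))` with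
`(L_y,R_y) = Sh(0^b, y)` extracts from every source in `𝒴` with error `2^b·ε₂ + δ'`. -/
theorem extractor_from_modified_distributions
    (b d ℓ m : ℕ) (ε₁ ε₂ δ' : ℝ) (Sh : BS b → BS d → BS ℓ × BS ℓ)
    (Rec : BS ℓ × BS ℓ → BS b) (𝒴 : Set (BS d → ℝ))
    (hscheme : IsLRSS b d ℓ Sh Rec 𝒴 ε₁ ε₂)
    (f g : BS ℓ → BS b) (h : BS (2 * b) → BS m)
    (hmod : ∀ y : BS d,
      statDist (push (fun x => h (concat (f (Sh x y).1) (g (Sh x y).2))) (unif b))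
        (unif m) ≤ δ') :
    ∀ Y ∈ 𝒴,
      statDist
        (push (fun y => h (concat (f (Sh (fun _ => false) y).1)
          (g (Sh (fun _ => false) y).2))) Y)
        (unif m) ≤ (2:ℝ) ^ b * ε₂ + δ' := by
  intro Y hY
  obtain ⟨hdist, -, -, hleak⟩ := hscheme
  set x₀ : BS b := fun _ => false
  set leaks : BS b → BS d → BS b × BS b := fun x y => (f (Sh x y).1, g (Sh x y).2)
  set P : BS b → BS m → ℝ := fun x => push (fun y => h (concat (leaks x y).1 (leaks x y).2)) Y
  have hclose : ∀ x, statDist (P x₀) (P x) ≤ 2 ^ b * ε₂ := by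
    intro x
    simp only [P, ← push_push (leaks _) (fun uv => h (concat uv.1 uv.2))]
    refine (statDist_push_le _ _ _).trans ?_
    have hcard : (Fintype.card (BS b) : ℝ) = 2 ^ b := by simp
    rw [← hcard]
    refine statDist_le_card_mul_of_leakage (by rw [sum_push, sum_push]) fun fa gb => ?_
    rw [push_push, push_push]
    exact hleak Y hY x₀ x (fa ∘ f) (gb ∘ g)
  have hP₀ : P x₀ = ∑ x, unif b x • P x₀ := by rw [← sum_smul, (isDist_unif b).2, one_smul]
  have hU : unif m = ∑ y, Y y • unif m := by rw [← sum_smul, (hdist Y hY).2, one_smul]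
  have hmix : ∑ x, unif b x • P x
      = ∑ y, Y y • push (fun x => h (concat (f (Sh x y).1) (g (Sh x y).2))) (unif b) :=
    sum_smul_push_comm _ _ _
  calc statDist (P x₀) (unif m)
      ≤ statDist (P x₀) (∑ x, unif b x • P x) + statDist (∑ x, unif b x • P x) (unif m) :=
        statDist_triangle _ _ _
    _ ≤ 2 ^ b * ε₂ + δ' := by
        gcongr
        · rw [hP₀]
          exact statDist_sum_smul_le (isDist_unif b) hclose
        · rw [hmix, hU]
          exact statDist_sum_smul_le (hdist Y hY) hmod
end

section
/- Let (Sh, Rec, 𝒴) be an (ε₁,ε₂)-leakage-resilient secret sharing scheme for b-bit messages using d bits of randomness. Then for every integer t ≥ 1, all secrets x, x' ∈ {0,1}^b, every randomness source Y ∈ 𝒴, and all functions f, g: {0,1}^ℓ → {0,1}^t, it holds that (f(Sh₁), g(Sh₂)) ≈_{ε'} (f(Sh₁'), g(Sh₂')) with ε' = 2^t·ε₂, where (Sh₁, Sh₂) = Sh(x, Y) and (Sh₁', Sh₂') = Sh(x', Y). -/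
open Finset
open scoped Classical

lemma push_total {S T : Type*} [Fintype S] [Fintype T] [DecidableEq T] (f : S → T) (p : S → ℝ) :
    ∑ t, push f p t = ∑ s, p s := by
  unfold push
  rw [Finset.sum_comm]
  simp [Finset.sum_ite_eq]

lemma point_le_statDist {S : Type*} [Fintype S] (p q : S → ℝ)
    (h : ∑ s, p s = ∑ s, q s) (s : S) : p s - q s ≤ statDist p q := by
  have key : ∑ a, (|p a - q a| + (p a - q a)) / 2 = statDist p q := by
    unfold statDist
    rw [← Finset.sum_div, Finset.sum_add_distrib]
    have h0 : ∑ a, (p a - q a) = 0 := by rw [Finset.sum_sub_distrib, h, sub_self]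
    rw [h0, add_zero]
  calc p s - q s ≤ (|p s - q s| + (p s - q s)) / 2 := by
        have := le_abs_self (p s - q s); linarith
    _ ≤ ∑ a, (|p a - q a| + (p a - q a)) / 2 := by
        apply Finset.single_le_sum (fun a _ => ?_) (Finset.mem_univ s)
        have := neg_abs_le (p a - q a); linarith
    _ = statDist p q := key

lemma statDist_eq_sum_posPart {S : Type*} [Fintype S] (p q : S → ℝ)
    (h : ∑ s, p s = ∑ s, q s) :
    statDist p q = ∑ s, max (p s - q s) 0 := by
  unfold statDist
  have h0 : ∑ a, (p a - q a) = 0 := by rw [Finset.sum_sub_distrib, h, sub_self]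
  have habs : ∀ a, |p a - q a| = 2 * max (p a - q a) 0 - (p a - q a) := by
    intro a; rcases le_or_gt (p a - q a) 0 with h' | h'
    · rw [max_eq_right h', abs_of_nonpos h']; ring
    · rw [max_eq_left h'.le, abs_of_pos h']; ring
  simp_rw [habs]
  rw [Finset.sum_sub_distrib, h0, sub_zero, ← Finset.mul_sum]
  ring

lemma push_sum_event {S T : Type*} [Fintype S] [Fintype T] [DecidableEq T]
    (h : S → T) (p : S → ℝ) (A : T → Prop) [DecidablePred A] :
    ∑ z, (if A z then push h p z else 0) = ∑ s, if A (h s) then p s else 0 := by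
  unfold push
  have step : ∀ z, (if A z then ∑ s, (if h s = z then p s else 0) else 0)
      = ∑ s, (if h s = z ∧ A z then p s else 0) := by
    intro z; by_cases hz : A z <;> simp [hz]
  simp_rw [step]
  rw [Finset.sum_comm]
  apply Finset.sum_congr rfl
  intro s _
  have : ∀ z, (if h s = z ∧ A z then p s else 0)
      = (if h s = z then (if A z then p s else 0) else 0) := by
    intro z; by_cases h1 : h s = z <;> simp [h1]
  simp_rw [this]
  simp [Finset.sum_ite_eq]

/-- Amplification of leakage-resilience: a scheme resilient against one bit of local
leakage with error `ε₂` is resilient against `t` bits of local leakage from each share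
with error `2^t · ε₂`. -/
theorem amplify_leakage_resilience
    (b d ℓ : ℕ) (ε₁ ε₂ : ℝ) (Sh : BS b → BS d → BS ℓ × BS ℓ)
    (Rec : BS ℓ × BS ℓ → BS b) (𝒴 : Set (BS d → ℝ))
    (hscheme : IsLRSS b d ℓ Sh Rec 𝒴 ε₁ ε₂) :
    ∀ t : ℕ, 1 ≤ t → ∀ x x' : BS b, ∀ Y ∈ 𝒴, ∀ f g : BS ℓ → BS t,
      statDist (push (fun y => (f (Sh x y).1, g (Sh x y).2)) Y)
               (push (fun y => (f (Sh x' y).1, g (Sh x' y).2)) Y) ≤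
        (2:ℝ) ^ t * ε₂ := by
  obtain ⟨hdist, -, -, hleak⟩ := hscheme
  intro t ht x x' Y hY f g
  set P : BS t × BS t → ℝ := push (fun y => (f (Sh x y).1, g (Sh x y).2)) Y with hPdef
  set Q : BS t × BS t → ℝ := push (fun y => (f (Sh x' y).1, g (Sh x' y).2)) Y with hQdef
  have hsum : ∑ z, P z = ∑ z, Q z := by
    rw [hPdef, hQdef, push_total, push_total]
  rw [statDist_eq_sum_posPart P Q hsum, Fintype.sum_prod_type]
  have key : ∀ α : BS t, (∑ β : BS t, max (P (α, β) - Q (α, β)) 0) ≤ ε₂ := by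
    intro α
    set fα : BS ℓ → Bool := fun s => if f s = α then true else false with hfα
    set gα : BS ℓ → Bool := fun s => if 0 ≤ P (α, g s) - Q (α, g s) then true else false with hgα
    have h1 := hleak Y hY x x' fα gα
    set P₁ : Bool × Bool → ℝ := push (fun y => (fα (Sh x y).1, gα (Sh x y).2)) Y with hP1
    set Q₁ : Bool × Bool → ℝ := push (fun y => (fα (Sh x' y).1, gα (Sh x' y).2)) Y with hQ1
    have hsum1 : ∑ z, P₁ z = ∑ z, Q₁ z := by rw [hP1, hQ1, push_total, push_total]
    have hpoint : P₁ (true, true) - Q₁ (true, true) ≤ ε₂ :=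
      le_trans (point_le_statDist _ _ hsum1 (true, true)) h1
    -- the event on pairs
    set A : BS t × BS t → Prop := fun z => z.1 = α ∧ 0 ≤ P (α, z.2) - Q (α, z.2) with hA
    have hcond : ∀ s₁ s₂ : BS ℓ, ((fα s₁, gα s₂) = (true, true)) ↔ A (f s₁, g s₂) := by
      intro s₁ s₂
      simp only [hfα, hgα, hA, Prod.mk.injEq]
      constructor
      · rintro ⟨h₁, h₂⟩
        constructor
        · by_contra hc; simp [hc] at h₁
        · by_contra hc; simp [hc] at h₂
      · rintro ⟨h₁, h₂⟩
        constructor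
        · simp [h₁]
        · simp [h₂]
    have hPev : ∀ xx : BS b,
        ∑ z, (if A z then push (fun y => (f (Sh xx y).1, g (Sh xx y).2)) Y z else 0)
          = push (fun y => (fα (Sh xx y).1, gα (Sh xx y).2)) Y (true, true) := by
      intro xx
      rw [push_sum_event]
      unfold push
      apply Finset.sum_congr rfl
      intro y _
      by_cases hc : A (f (Sh xx y).1, g (Sh xx y).2)
      · rw [if_pos hc, if_pos ((hcond _ _).mpr hc)]
      · rw [if_neg hc, if_neg (fun hh => hc ((hcond _ _).mp hh))]
    have hsplit : (∑ β : BS t, max (P (α, β) - Q (α, β)) 0)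
        = P₁ (true, true) - Q₁ (true, true) := by
      have e1 : ∑ z, (if A z then P z else 0) = P₁ (true, true) := hPev x
      have e2 : ∑ z, (if A z then Q z else 0) = Q₁ (true, true) := hPev x'
      rw [← e1, ← e2, ← Finset.sum_sub_distrib, Fintype.sum_prod_type]
      have hout : ∀ a : BS t, (∑ β : BS t,
          ((if A (a, β) then P (a, β) else 0) - (if A (a, β) then Q (a, β) else 0)))
          = if a = α then (∑ β : BS t, max (P (α, β) - Q (α, β)) 0) else 0 := by
        intro a
        by_cases ha : a = α
        · subst ha
          rw [if_pos rfl]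
          apply Finset.sum_congr rfl
          intro β _
          by_cases hb : 0 ≤ P (a, β) - Q (a, β)
          · rw [if_pos ⟨rfl, hb⟩, if_pos ⟨rfl, hb⟩, max_eq_left hb]
          · rw [if_neg (fun hh => hb hh.2), if_neg (fun hh => hb hh.2),
              max_eq_right (le_of_not_ge hb)]
            ring
        · rw [if_neg ha]
          apply Finset.sum_eq_zero
          intro β _
          rw [if_neg (fun hh => ha hh.1), if_neg (fun hh => ha hh.1), sub_zero]
      simp_rw [hout]
      rw [Finset.sum_ite_eq' Finset.univ α
        (fun _ => ∑ β : BS t, max (P (α, β) - Q (α, β)) 0)]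
      simp
    rw [hsplit]
    exact hpoint
  calc (∑ α : BS t, ∑ β : BS t, max (P (α, β) - Q (α, β)) 0)
      ≤ ∑ _α : BS t, ε₂ := Finset.sum_le_sum (fun α _ => key α)
    _ = (2:ℝ) ^ t * ε₂ := by
        rw [Finset.sum_const, Finset.card_univ, nsmul_eq_mul]
        norm_num [Fintype.card_fun]
end

section
/- For all positive integers t, n, t', n' with t' ≥ t and n' ≥ n + (t' − t), there exists a (t,n,t',n')-distribution design. -/
/-- `D₁, …, Dₙ ⊆ [n']` is a `(t, n, t', n')`-distribution design if for every
`T ⊆ [n]`, the union `∪_{i ∈ T} D_i` has size at least `t'` iff `|T| ≥ t`. -/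
def IsDistDesign (t n t' n' : ℕ) (D : Fin n → Finset (Fin n')) : Prop :=
  ∀ T : Finset (Fin n), t' ≤ (T.biUnion D).card ↔ t ≤ T.card

/-- Naive construction: a `(t,n,t',n')`-distribution design exists whenever `t' ≥ t`
and `n' ≥ n + (t' - t)`. -/
theorem naive_distribution_design
    (t n t' n' : ℕ) (ht : 0 < t) (htn : t ≤ n) (htt : t ≤ t')
    (hn : n + (t' - t) ≤ n') :
    ∃ D : Fin n → Finset (Fin n'), IsDistDesign t n t' n' D := by
  set s := t' - t with hs
  have hnn' : n ≤ n' := le_trans (Nat.le_add_right n s) hn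
  -- embedding of Fin n into Fin n'
  let e : Fin n ↪ Fin n' := ⟨fun i => ⟨i.1, lt_of_lt_of_le i.2 hnn'⟩,
    fun a b h => by
      have := congrArg Fin.val h
      exact Fin.ext this⟩
  -- block embedding
  let f : Fin s ↪ Fin n' := ⟨fun j => ⟨n + j.1, lt_of_lt_of_le (by omega) hn⟩,
    fun a b h => by
      have : n + a.1 = n + b.1 := congrArg Fin.val h
      exact Fin.ext (by omega)⟩
  let B : Finset (Fin n') := Finset.univ.map f
  have hBcard : B.card = s := by simp [B]
  refine ⟨fun i => insert (e i) B, fun T => ?_⟩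
  rcases T.eq_empty_or_nonempty with rfl | hT
  · simp; omega
  · have hunion : T.biUnion (fun i => insert (e i) B) = T.map e ∪ B := by
      ext x
      simp only [Finset.mem_biUnion, Finset.mem_insert, Finset.mem_union,
        Finset.mem_map]
      constructor
      · rintro ⟨i, hi, rfl | hx⟩
        · exact Or.inl ⟨i, hi, rfl⟩
        · exact Or.inr hx
      · rintro (⟨i, hi, rfl⟩ | hx)
        · exact ⟨i, hi, Or.inl rfl⟩
        · obtain ⟨i, hi⟩ := hT
          exact ⟨i, hi, Or.inr hx⟩
    have hdisj : Disjoint (T.map e) B := by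
      rw [Finset.disjoint_left]
      rintro x hx hxB
      simp only [Finset.mem_map, B, Finset.mem_map, Finset.mem_univ,
        true_and] at hx hxB
      obtain ⟨i, _, rfl⟩ := hx
      obtain ⟨j, hj⟩ := hxB
      have h1 : (f j).1 = (e i).1 := congrArg Fin.val hj
      have h2 : (f j).1 = n + j.1 := rfl
      have h3 : (e i).1 = i.1 := rfl
      have h4 : i.1 < n := i.2
      omega
    have hcard : (T.biUnion (fun i => insert (e i) B)).card = T.card + s := by
      rw [hunion, Finset.card_union_of_disjoint hdisj, Finset.card_map, hBcard]
    rw [hcard]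
    omega
end

section
/- If a (t,n,t',n')-distribution design exists, then binomial(n', t'−1) ≥ binomial(n, t−1) and t' ≥ t. -/
/-- A `(t,n,t',n')`-distribution design exists only if
`binomial(n', t'-1) ≥ binomial(n, t-1)` and `t' ≥ t`. -/
theorem distribution_design_necessary_conditions
    (t n t' n' : ℕ) (ht : 0 < t) (htn : t ≤ n) (ht' : 0 < t') (ht'n' : t' ≤ n')
    (D : Fin n → Finset (Fin n')) (hD : IsDistDesign t n t' n' D) :
    Nat.choose n (t - 1) ≤ Nat.choose n' (t' - 1) ∧ t ≤ t' := by
  classical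
  -- small unions: if |T| = t-1 then |biUnion| ≤ t'-1
  have hsmall : ∀ T : Finset (Fin n), T.card ≤ t - 1 → (T.biUnion D).card ≤ t' - 1 := by
    intro T hT
    have h1 : ¬ t ≤ T.card := by omega
    have h2 : ¬ t' ≤ (T.biUnion D).card := fun h => h1 ((hD T).mp h)
    omega
  constructor
  · -- injection from (t-1)-subsets of Fin n to (t'-1)-subsets of Fin n'
    have hchoice : ∀ T : Finset (Fin n), T.card = t - 1 →
        ∃ S : Finset (Fin n'), T.biUnion D ⊆ S ∧ S.card = t' - 1 := by
      intro T hT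
      have h1 : (T.biUnion D).card ≤ t' - 1 := hsmall T (le_of_eq hT)
      have h2 : t' - 1 ≤ (Finset.univ : Finset (Fin n')).card := by
        simp [Finset.card_univ]; omega
      obtain ⟨S, hS1, _, hS3⟩ := Finset.exists_subsuperset_card_eq
        (T.biUnion D).subset_univ h1 h2
      exact ⟨S, hS1, hS3⟩
    set f : Finset (Fin n) → Finset (Fin n') := fun T =>
      if h : T.card = t - 1 then (hchoice T h).choose else ∅ with hf
    have key : (Finset.univ.powersetCard (t - 1) : Finset (Finset (Fin n))).card ≤
        (Finset.univ.powersetCard (t' - 1) : Finset (Finset (Fin n'))).card := by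
      apply Finset.card_le_card_of_injOn f
      · intro T hT
        rw [Finset.mem_coe, Finset.mem_powersetCard] at hT ⊢
        rw [hf]
        simp only [hT.2, dif_pos]
        exact ⟨Finset.subset_univ _, (hchoice T hT.2).choose_spec.2⟩
      · intro T₁ h₁ T₂ h₂ hfe
        simp only [Finset.mem_coe, Finset.mem_powersetCard] at h₁ h₂
        by_contra hne
        have hcard : t ≤ (T₁ ∪ T₂).card := by
          by_contra hlt
          have h1 : T₁.card ≤ (T₁ ∪ T₂).card := Finset.card_le_card Finset.subset_union_left
          have e1 : T₁ = T₁ ∪ T₂ :=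
            Finset.eq_of_subset_of_card_le Finset.subset_union_left (by omega)
          have e2 : T₂ = T₁ ∪ T₂ :=
            Finset.eq_of_subset_of_card_le Finset.subset_union_right (by omega)
          exact hne (e1.trans e2.symm)
        have hbig : t' ≤ ((T₁ ∪ T₂).biUnion D).card := (hD _).mpr hcard
        have hsub : (T₁ ∪ T₂).biUnion D ⊆ f T₁ := by
          rw [Finset.biUnion_subset]
          intro i hi
          rcases Finset.mem_union.mp hi with hi | hi
          · rw [hf]; simp only [h₁.2, dif_pos]
            exact (Finset.subset_biUnion_of_mem D hi).trans (hchoice T₁ h₁.2).choose_spec.1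
          · rw [hfe, hf]; simp only [h₂.2, dif_pos]
            exact (Finset.subset_biUnion_of_mem D hi).trans (hchoice T₂ h₂.2).choose_spec.1
        have hle : ((T₁ ∪ T₂).biUnion D).card ≤ t' - 1 := by
          have := Finset.card_le_card hsub
          have hfc : (f T₁).card = t' - 1 := by
            rw [hf]; simp only [h₁.2, dif_pos]
            exact (hchoice T₁ h₁.2).choose_spec.2
          omega
        omega
    simpa [Finset.card_powersetCard, Finset.card_univ] using key
  · -- t ≤ t'
    have grow : ∀ k, k ≤ t - 1 → ∃ T : Finset (Fin n), T.card = k ∧ k ≤ (T.biUnion D).card := by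
      intro k hk
      induction k with
      | zero => exact ⟨∅, by simp⟩
      | succ m ih =>
        obtain ⟨T, hTc, hTu⟩ := ih (by omega)
        -- find i ∉ T with D i ⊄ biUnion
        have : ∃ i, i ∉ T ∧ ¬ D i ⊆ T.biUnion D := by
          by_contra hno
          push_neg at hno
          -- extend T to size t
          have h2 : t ≤ (Finset.univ : Finset (Fin n)).card := by
            simp [Finset.card_univ]; omega
          obtain ⟨T', hT'1, _, hT'3⟩ := Finset.exists_subsuperset_card_eq
            T.subset_univ (by omega) h2
          have hbig : t' ≤ (T'.biUnion D).card := (hD T').mpr (le_of_eq hT'3.symm)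
          have hsub : T'.biUnion D ⊆ T.biUnion D := by
            rw [Finset.biUnion_subset]
            intro i hi
            by_cases hiT : i ∈ T
            · exact Finset.subset_biUnion_of_mem D hiT
            · exact hno i hiT
          have := Finset.card_le_card hsub
          have := hsmall T (by omega)
          omega
        obtain ⟨i, hiT, hiD⟩ := this
        refine ⟨insert i T, by rw [Finset.card_insert_of_notMem hiT, hTc], ?_⟩
        have hssub : T.biUnion D ⊂ (insert i T).biUnion D := by
          constructor
          · exact Finset.biUnion_subset_biUnion_of_subset_left D (Finset.subset_insert i T)
          · intro hcon
            exact hiD ((Finset.subset_biUnion_of_mem D (Finset.mem_insert_self i T)).trans hcon)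
        have := Finset.card_lt_card hssub
        omega
    obtain ⟨T, hTc, hTu⟩ := grow (t - 1) le_rfl
    have := hsmall T (le_of_eq hTc)
    omega
end

section
/- For positive integers n, t', n' with n ≥ 2 and t' ≤ n', a (t=2, n, t', n')-distribution design exists if and only if n ≤ binomial(n', t'−1). -/
lemma union_card_of_ne {α : Type*} [DecidableEq α] {A B : Finset α} {k : ℕ}
    (hA : A.card = k) (hB : B.card = k) (hne : A ≠ B) : k + 1 ≤ (A ∪ B).card := by
  by_contra h
  push_neg at h
  have hsub : A ⊆ A ∪ B := Finset.subset_union_left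
  have h1 : (A ∪ B).card ≤ A.card := by omega
  have h2 : A = A ∪ B := Finset.eq_of_subset_of_card_le hsub h1
  have hBA : B ⊆ A := by rw [h2]; exact Finset.subset_union_right
  exact hne (Finset.eq_of_subset_of_card_le hBA (by omega)).symm

/-- A `(2,n,t',n')`-distribution design exists if and only if `n ≤ binomial(n', t'-1)`. -/
theorem distribution_design_t_eq_two_iff
    (n t' n' : ℕ) (hn : 2 ≤ n) (ht' : 0 < t') (ht'n' : t' ≤ n') :
    (∃ D : Fin n → Finset (Fin n'), IsDistDesign 2 n t' n' D) ↔
      n ≤ Nat.choose n' (t' - 1) := by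
  constructor
  · rintro ⟨D, hD⟩
    -- each D i has card ≤ t'-1
    have hcard : ∀ i, (D i).card ≤ t' - 1 := by
      intro i
      have h1 : ¬ t' ≤ (({i} : Finset (Fin n)).biUnion D).card := by
        rw [hD]; simp
      simp only [Finset.singleton_biUnion] at h1
      omega
    -- pairs
    have hpair : ∀ i j : Fin n, i ≠ j → t' ≤ (D i ∪ D j).card := by
      intro i j hij
      have h1 : t' ≤ (({i, j} : Finset (Fin n)).biUnion D).card := by
        rw [hD]
        rw [Finset.card_insert_of_notMem (by simpa using hij), Finset.card_singleton]
      simpa using h1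
    -- extend each D i to a set of size t'-1
    have hext : ∀ i, ∃ E : Finset (Fin n'), D i ⊆ E ∧ E.card = t' - 1 := by
      intro i
      obtain ⟨E, h1, _, h3⟩ := Finset.exists_subsuperset_card_eq
        (Finset.subset_univ (D i)) (hcard i)
        (by simp only [Finset.card_univ, Fintype.card_fin]; omega)
      exact ⟨E, h1, h3⟩
    choose E hE1 hE2 using hext
    have hinj : Function.Injective (fun i => (⟨E i, hE2 i⟩ :
        {S : Finset (Fin n') // S.card = t' - 1})) := by
      intro i j hij
      simp only [Subtype.mk.injEq] at hij
      by_contra hne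
      have h1 : D i ∪ D j ⊆ E i := Finset.union_subset (hE1 i) (hij ▸ hE1 j)
      have h2 := Finset.card_le_card h1
      have h3 := hpair i j hne
      have h4 := hE2 i
      omega
    have := Fintype.card_le_of_injective _ hinj
    simpa [Fintype.card_finset_len] using this
  · intro hle
    have hcard : Fintype.card (Fin n) ≤
        Fintype.card {S : Finset (Fin n') // S.card = t' - 1} := by
      simpa [Fintype.card_finset_len] using hle
    obtain ⟨f⟩ := Function.Embedding.nonempty_of_card_le hcard
    refine ⟨fun i => (f i).1, fun T => ?_⟩
    constructor
    · intro h
      by_contra hT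
      push_neg at hT
      have hT1 : T.card ≤ 1 := by omega
      have : Nonempty (Fin n) := ⟨⟨0, by omega⟩⟩
      obtain ⟨x, hx⟩ := Finset.card_le_one_iff_subset_singleton.mp hT1
      have hsub : T.biUnion (fun i => (f i).1) ⊆ (f x).1 := by
        intro a ha
        obtain ⟨i, hi, hai⟩ := Finset.mem_biUnion.mp ha
        have : i = x := by simpa using hx hi
        exact this ▸ hai
      have hc1 : (T.biUnion fun i => ((f i : Finset (Fin n')))).card ≤ ((f x : Finset (Fin n'))).card :=
        Finset.card_le_card hsub
      have hc2 : ((f x : Finset (Fin n'))).card = t' - 1 := (f x).2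
      omega
    · intro h
      have hT1 : 1 < T.card := by omega
      obtain ⟨i, hi, j, hj, hij⟩ := Finset.one_lt_card.mp hT1
      have hne : (f i).1 ≠ (f j).1 := fun hEq =>
        hij (f.injective (Subtype.ext hEq))
      have h1 : t' - 1 + 1 ≤ ((f i).1 ∪ (f j).1).card :=
        union_card_of_ne (f i).2 (f j).2 hne
      have hsub : (f i).1 ∪ (f j).1 ⊆ T.biUnion (fun i => (f i).1) := by
        apply Finset.union_subset
        · exact Finset.subset_biUnion_of_mem (fun i => ((f i : Finset (Fin n')))) hi
        · exact Finset.subset_biUnion_of_mem (fun i => ((f i : Finset (Fin n')))) hj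
      have hc : (((f i : Finset (Fin n'))) ∪ ((f j : Finset (Fin n')))).card ≤
          (T.biUnion fun i => ((f i : Finset (Fin n')))).card := Finset.card_le_card hsub
      omega
end

section
/- For positive integers t, n, n' with t ≤ n, a (t, n, t'=n', n')-distribution design exists if and only if n' ≥ binomial(n, t−1). -/
/-- A `(t,n,n',n')`-distribution design exists if and only if `n' ≥ binomial(n, t-1)`. -/
theorem distribution_design_t'_eq_n'_iff
    (t n n' : ℕ) (ht : 0 < t) (htn : t ≤ n) (hn' : 0 < n') :
    (∃ D : Fin n → Finset (Fin n'), IsDistDesign t n n' n' D) ↔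
      Nat.choose n (t - 1) ≤ n' := by
  have hFin : Nonempty (Fin n') := ⟨⟨0, hn'⟩⟩
  constructor
  · rintro ⟨D, hD⟩
    have key : ∀ S : Finset (Fin n), ∃ y : Fin n',
        S.card = t - 1 → y ∉ S.biUnion D := by
      intro S
      by_cases hS : S.card = t - 1
      · have hlt : (S.biUnion D).card < n' := by
          by_contra h
          push_neg at h
          have := (hD S).mp h
          omega
        have hne : S.biUnion D ≠ Finset.univ := by
          intro h
          rw [h, Finset.card_univ, Fintype.card_fin] at hlt
          omega
        obtain ⟨y, _, hy⟩ := Finset.exists_of_ssubset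
          ((Finset.ssubset_univ_iff).mpr hne)
        exact ⟨y, fun _ => hy⟩
      · exact ⟨Classical.arbitrary _, fun h => absurd h hS⟩
    choose y hy using key
    set P := Finset.powersetCard (t - 1) (Finset.univ : Finset (Fin n)) with hP
    have hinj : Set.InjOn y P := by
      intro S hS S' hS' heq
      by_contra hne
      have hSc : S.card = t - 1 := (Finset.mem_powersetCard.mp hS).2
      have hS'c : S'.card = t - 1 := (Finset.mem_powersetCard.mp hS').2
      have hcup : t ≤ (S ∪ S').card := by
        have hss : S ⊂ S ∪ S' := by
          refine ⟨Finset.subset_union_left, fun h => hne ?_⟩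
          have : S' ⊆ S := Finset.union_subset_iff.mp h |>.2
          exact (Finset.eq_of_subset_of_card_le this (by omega)).symm
        have := Finset.card_lt_card hss
        omega
      have huniv : (S ∪ S').biUnion D = Finset.univ := by
        have h1 := (hD (S ∪ S')).mpr hcup
        apply Finset.eq_univ_of_card
        have := Finset.card_le_univ ((S ∪ S').biUnion D)
        rw [Fintype.card_fin] at this ⊢
        omega
      have hmem : y S ∈ (S ∪ S').biUnion D := by
        rw [huniv]; exact Finset.mem_univ _
      obtain ⟨i, hi, hmi⟩ := Finset.mem_biUnion.mp hmem
      rcases Finset.mem_union.mp hi with h | h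
      · exact hy S hSc (Finset.mem_biUnion.mpr ⟨i, h, hmi⟩)
      · rw [heq] at hmi
        exact hy S' hS'c (Finset.mem_biUnion.mpr ⟨i, h, hmi⟩)
    have hcard := Finset.card_le_card_of_injOn y
      (fun S _ => Finset.mem_univ (y S)) hinj
    rw [hP, Finset.card_powersetCard, Finset.card_univ, Fintype.card_fin,
      Finset.card_univ, Fintype.card_fin] at hcard
    exact hcard
  · intro h
    set P := Finset.powersetCard (t - 1) (Finset.univ : Finset (Fin n)) with hP
    have hcardP : Fintype.card {S // S ∈ P} = Nat.choose n (t - 1) := by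
      rw [Fintype.card_coe, hP, Finset.card_powersetCard, Finset.card_univ,
        Fintype.card_fin]
    obtain ⟨g⟩ : Nonempty ({S // S ∈ P} ↪ Fin n') := by
      rw [Function.Embedding.nonempty_iff_card_le, hcardP, Fintype.card_fin]
      exact h
    set D : Fin n → Finset (Fin n') := fun i => Finset.univ \
      ((Finset.univ.filter fun S : {S // S ∈ P} => i ∈ S.1).image g) with hDdef
    refine ⟨D, ?_⟩
    intro T
    constructor
    · intro hle
      by_contra hTc
      push_neg at hTc
      obtain ⟨S, hTS, -, hSc⟩ := Finset.exists_subsuperset_card_eq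
        (n := t - 1) (Finset.subset_univ T) (by omega)
        (by rw [Finset.card_univ, Fintype.card_fin]; omega)
      have hSP : S ∈ P := Finset.mem_powersetCard.mpr ⟨Finset.subset_univ S, hSc⟩
      set x := g ⟨S, hSP⟩ with hx
      have hxnot : x ∉ T.biUnion D := by
        simp only [Finset.mem_biUnion]
        rintro ⟨i, hi, hxi⟩
        rw [hDdef, Finset.mem_sdiff] at hxi
        exact hxi.2 (Finset.mem_image.mpr ⟨⟨S, hSP⟩,
          Finset.mem_filter.mpr ⟨Finset.mem_univ _, hTS hi⟩, rfl⟩)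
      have hss : T.biUnion D ⊂ Finset.univ :=
        (Finset.ssubset_univ_iff).mpr (fun hu => hxnot (hu ▸ Finset.mem_univ x))
      have := Finset.card_lt_card hss
      rw [Finset.card_univ, Fintype.card_fin] at this
      omega
    · intro hT
      have huniv : T.biUnion D = Finset.univ := by
        apply Finset.eq_univ_of_forall
        intro x
        rw [Finset.mem_biUnion]
        simp only [hDdef]
        by_cases hxr : ∃ S : {S // S ∈ P}, g S = x
        · obtain ⟨S, hSx⟩ := hxr
          have hSc : S.1.card = t - 1 := (Finset.mem_powersetCard.mp S.2).2
          have : ¬ T ⊆ S.1 := fun hsub => by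
            have := Finset.card_le_card hsub; omega
          obtain ⟨i, hi, hiS⟩ := Finset.not_subset.mp this
          refine ⟨i, hi, Finset.mem_sdiff.mpr ⟨Finset.mem_univ _, ?_⟩⟩
          rw [Finset.mem_image]
          rintro ⟨S', hS', hS'x⟩
          have : S' = S := g.injective (by rw [hS'x, hSx])
          rw [this] at hS'
          exact hiS (Finset.mem_filter.mp hS').2
        · obtain ⟨i, hi⟩ := Finset.card_pos.mp (by omega : 0 < T.card)
          refine ⟨i, hi, Finset.mem_sdiff.mpr ⟨Finset.mem_univ _, ?_⟩⟩
          rw [Finset.mem_image]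
          rintro ⟨S', _, hS'x⟩
          exact hxr ⟨S', hS'x⟩
      rw [huniv, Finset.card_univ, Fintype.card_fin]
end

section
/- Let C ≥ 1 be a constant and suppose t, t' are positive integers with t³ ≤ t' ≤ C·t³. Then for every positive integer n and every integer n' ≥ 2e·C²·√n·t⁴, there exists a (t,n,t',n')-distribution design. (Here e is Euler's number.) -/
open Finset


lemma card_biUnion_lower {ι α : Type*} [DecidableEq ι] [DecidableEq α]
    (G : ι → Finset α) (b : ℕ) (T : Finset ι) :
    (∀ i ∈ T, b ≤ (G i).card) →
    (∀ i ∈ T, ∀ j ∈ T, i ≠ j → (G i ∩ G j).card ≤ 1) →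
    2 * (T.card * b) + T.card ≤ 2 * (T.biUnion G).card + T.card * T.card := by
  induction T using Finset.induction_on with
  | empty => simp
  | @insert a s ha ih =>
    intro hsize hpair
    have hGa : b ≤ (G a).card := hsize a (mem_insert_self a s)
    have ihh := ih (fun i hi => hsize i (mem_insert_of_mem hi))
      (fun i hi j hj hij => hpair i (mem_insert_of_mem hi) j (mem_insert_of_mem hj) hij)
    have hcard : (insert a s).card = s.card + 1 := card_insert_of_notMem ha
    have hbu : (insert a s).biUnion G = G a ∪ s.biUnion G := biUnion_insert
    have hint : (G a ∩ s.biUnion G).card ≤ s.card := by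
      have h1 : G a ∩ s.biUnion G = s.biUnion (fun j => G a ∩ G j) := by
        ext x; simp [mem_biUnion, mem_inter]; tauto
      rw [h1]
      calc (s.biUnion fun j => G a ∩ G j).card ≤ ∑ j ∈ s, (G a ∩ G j).card :=
            card_biUnion_le
        _ ≤ ∑ _j ∈ s, 1 := Finset.sum_le_sum (fun j hj =>
            hpair a (mem_insert_self a s) j (mem_insert_of_mem hj)
              (fun h => ha (h ▸ hj)))
        _ = s.card := by simp
    have hu : (G a ∪ s.biUnion G).card + (G a ∩ s.biUnion G).card
        = (G a).card + (s.biUnion G).card := card_union_add_card_inter _ _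
    rw [hcard, hbu]
    nlinarith [hu, hint, hGa, ihh]


/-- Graph of the line `y = p.1 x + p.2` over the domain `Fin b ⊆ ZMod q`. -/
def lineGraph (q b : ℕ) (p : ZMod q × ZMod q) : Finset (Fin b × ZMod q) :=
  Finset.univ.image (fun x : Fin b => (x, p.1 * ((x : ℕ) : ZMod q) + p.2))

lemma lineGraph_card (q b : ℕ) [NeZero q] (p : ZMod q × ZMod q) :
    (lineGraph q b p).card = b := by
  rw [lineGraph, Finset.card_image_of_injective _ (fun x y h => by
    simpa using congrArg Prod.fst h)]
  simp

lemma lineGraph_inter (q b : ℕ) [Fact (Nat.Prime q)] (hbq : b ≤ q)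
    {p p' : ZMod q × ZMod q} (hpp : p ≠ p') :
    (lineGraph q b p ∩ lineGraph q b p').card ≤ 1 := by
  rw [Finset.card_le_one]
  rintro ⟨x, y⟩ hz ⟨x', y'⟩ hw
  simp only [lineGraph, mem_inter, mem_image, mem_univ, true_and, Prod.mk.injEq] at hz hw
  obtain ⟨⟨x1, hx1, hy1⟩, ⟨x2, hx2, hy2⟩⟩ := hz
  obtain ⟨⟨x3, hx3, hy3⟩, ⟨x4, hx4, hy4⟩⟩ := hw
  subst hx1; subst hx3
  cases hx2; cases hx4

  -- now: y = p.1 * x + p.2 = p'.1 * x + p'.2,  y' = p.1 * x' + p.2 = p'.1 * x' + p'.2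
  have hinj : Function.Injective (fun x : Fin b => ((x : ℕ) : ZMod q)) := by
    intro u v h
    have hu : (((u : ℕ) : ZMod q)).val = (u:ℕ) := ZMod.val_cast_of_lt (lt_of_lt_of_le u.2 hbq)
    have hv : (((v : ℕ) : ZMod q)).val = (v:ℕ) := ZMod.val_cast_of_lt (lt_of_lt_of_le v.2 hbq)
    exact Fin.ext (by simpa [hu, hv] using congrArg ZMod.val h)
  by_cases hxx : x1 = x3
  · subst hxx
    exact Prod.ext rfl (hy1.symm.trans hy3)
  · exfalso
    have hne : ((x1 : ℕ) : ZMod q) ≠ ((x3 : ℕ) : ZMod q) := fun h => hxx (hinj h)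
    have e1 : p.1 * ((x1 : ℕ) : ZMod q) + p.2 = p'.1 * ((x1 : ℕ) : ZMod q) + p'.2 := by
      linear_combination hy1 - hy2
    have e2 : p.1 * ((x3 : ℕ) : ZMod q) + p.2 = p'.1 * ((x3 : ℕ) : ZMod q) + p'.2 := by
      linear_combination hy3 - hy4
    have hslope : p.1 = p'.1 := by
      have h3 : (p.1 - p'.1) * (((x1 : ℕ) : ZMod q) - ((x3 : ℕ) : ZMod q)) = 0 := by
        ring_nf
        linear_combination e1 - e2
      rcases mul_eq_zero.mp h3 with h | h
      · linear_combination h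
      · exact absurd (by linear_combination h) hne
    have hicpt : p.2 = p'.2 := by
      have := e1; rw [hslope] at this; linear_combination this
    exact hpp (Prod.ext hslope hicpt)


lemma dd_arith_one (C S a q E : ℝ) (hC : 1 ≤ C) (hS : 1 ≤ S)
    (ha : a ≤ C - 1) (hq : q ≤ 2*S + 2) (hE : 5 ≤ E) :
    a + q ≤ E * (C^2 * S) := by
  have h1 : C + 2*S + 1 ≤ 5 * (C^2 * S) := by
    nlinarith [mul_nonneg (sub_nonneg.mpr hC) (sub_nonneg.mpr hS), sq_nonneg (C-1),
      mul_le_mul hC hS (by linarith) (by linarith)]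
  have h2 : 5 * (C^2*S) ≤ E * (C^2*S) :=
    mul_le_mul_of_nonneg_right hE (by nlinarith [hC, hS])
  linarith

lemma dd_arith_main (C S T a b q E : ℝ) (hC : 1 ≤ C) (hS : 1 ≤ S) (hT : 2 ≤ T)
    (hb0 : 0 ≤ b) (hbR : 2*b ≤ T^2) (hqR : q ≤ 2*b + 2*S + 2)
    (haR : a ≤ C*T^3 - 1) (hE : 5 ≤ E) :
    a + b*q ≤ E * (C^2 * S * T^4) := by
  have hS0 : (0:ℝ) ≤ S := by linarith
  have hb2' : b ≤ T^2/2 := by linarith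
  have A1 : b * (2*b) ≤ (T^2/2) * (T^2) := mul_le_mul hb2' hbR (by linarith) (by positivity)
  have A2 : (2*b) * S ≤ T^2 * S := mul_le_mul_of_nonneg_right hbR hS0
  have step : b * q ≤ b * (2*b + 2*S + 2) := mul_le_mul_of_nonneg_left hqR hb0
  have hbq2 : b * q ≤ T^4/2 + T^2 * S + T^2 := by nlinarith [step, A1, A2, hbR]
  have hCS : (1:ℝ) ≤ C * S := by nlinarith [hC, hS]
  have hCST : (1:ℝ) ≤ C * S * T := by nlinarith [hCS, hT]
  have hC2S : (1:ℝ) ≤ C^2 * S := by nlinarith [hC, hS]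
  set P : ℝ := C^2 * S * T^4 with hP
  have hP0 : (0:ℝ) ≤ P := by rw [hP]; positivity
  have t1 : C * T^3 ≤ P := by
    have h0 : (0:ℝ) ≤ C * T^3 := by positivity
    calc C * T^3 = C * T^3 * 1 := by ring
      _ ≤ C * T^3 * (C * S * T) := mul_le_mul_of_nonneg_left hCST h0
      _ = P := by rw [hP]; ring
  have t2 : T^4 ≤ P := by
    calc T^4 = 1 * T^4 := by ring
      _ ≤ (C^2 * S) * T^4 := mul_le_mul_of_nonneg_right hC2S (by positivity)
      _ = P := by rw [hP]
  have h1T2 : (1:ℝ) ≤ T^2 := by nlinarith [hT]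
  have hT24 : T^2 ≤ T^4 := by
    calc T^2 = T^2 * 1 := by ring
      _ ≤ T^2 * T^2 := mul_le_mul_of_nonneg_left h1T2 (by positivity)
      _ = T^4 := by ring
  have t3 : T^2 * S ≤ P := by
    have c1 : T^2 * S ≤ T^4 * S := mul_le_mul_of_nonneg_right hT24 hS0
    have hC2 : (1:ℝ) ≤ C^2 := by nlinarith [hC]
    calc T^2 * S ≤ T^4 * S := c1
      _ = 1 * (S * T^4) := by ring
      _ ≤ C^2 * (S * T^4) := mul_le_mul_of_nonneg_right hC2 (by positivity)
      _ = P := by rw [hP]; ring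
  have t4 : T^2 ≤ P := le_trans hT24 t2
  have hsum : a + b*q ≤ 5 * P := by linarith
  have hfin : 5 * P ≤ E * P := mul_le_mul_of_nonneg_right hE hP0
  linarith

lemma exists_dist_design_core (t t' n n' a b q : ℕ) (hq : Nat.Prime q)
    (ht : 0 < t) (ht' : 0 < t')
    (hbq : b ≤ q) (hnq : n ≤ q * q) (hcard : a + b * q ≤ n')
    (h1 : a + (t - 1) * b < t')
    (h2 : 2 * t' + t * t ≤ 2 * a + 2 * (t * b) + t) :
    ∃ D : Fin n → Finset (Fin n'), IsDistDesign t n t' n' D := by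
  haveI : Fact (Nat.Prime q) := ⟨hq⟩
  haveI : NeZero q := ⟨hq.pos.ne'⟩
  obtain ⟨ψ⟩ : Nonempty (Fin n ↪ ZMod q × ZMod q) :=
    Function.Embedding.nonempty_of_card_le (by simpa [ZMod.card] using hnq)
  obtain ⟨e⟩ : Nonempty ((Fin a ⊕ Fin b × ZMod q) ↪ Fin n') :=
    Function.Embedding.nonempty_of_card_le (by simpa [ZMod.card] using hcard)
  set B : Fin n → Finset (Fin b × ZMod q) := fun i => lineGraph q b (ψ i) with hB
  set D : Fin n → Finset (Fin n') :=
    fun i => ((Finset.univ : Finset (Fin a)).disjSum (B i)).map e with hD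
  have hBcard : ∀ i, (B i).card = b := fun i => lineGraph_card q b (ψ i)
  have hBpair : ∀ i j : Fin n, i ≠ j → (B i ∩ B j).card ≤ 1 := fun i j h =>
    lineGraph_inter q b hbq (fun hh => h (ψ.injective hh))
  -- upper bound, valid for all T
  have hUB : ∀ T : Finset (Fin n), (T.biUnion D).card ≤ a + T.card * b := by
    intro T
    have hsub : T.biUnion D ⊆
        ((Finset.univ : Finset (Fin a)).disjSum (T.biUnion B)).map e := by
      intro z hz
      rw [Finset.mem_biUnion] at hz
      obtain ⟨i, hi, hzi⟩ := hz
      rw [hD] at hzi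
      simp only [Finset.mem_map] at hzi ⊢
      obtain ⟨w, hw, rfl⟩ := hzi
      refine ⟨w, ?_, rfl⟩
      rcases w with wa | wb
      · simp
      · simp only [Finset.inr_mem_disjSum] at hw ⊢
        exact Finset.mem_biUnion.mpr ⟨i, hi, hw⟩
    calc (T.biUnion D).card
        ≤ (((Finset.univ : Finset (Fin a)).disjSum (T.biUnion B)).map e).card :=
          Finset.card_le_card hsub
      _ = a + (T.biUnion B).card := by
          rw [Finset.card_map, Finset.card_disjSum, Finset.card_univ, Fintype.card_fin]
      _ ≤ a + T.card * b := by
          have := Finset.card_biUnion_le (s := T) (t := B)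
          have h2' : ∑ i ∈ T, (B i).card = T.card * b := by
            rw [Finset.sum_congr rfl (fun i _ => hBcard i), Finset.sum_const, smul_eq_mul]
          omega
  -- exact value for nonempty T
  have hEQ : ∀ T : Finset (Fin n), T.Nonempty →
      (T.biUnion D).card = a + (T.biUnion B).card := by
    intro T hT
    have heq : T.biUnion D =
        ((Finset.univ : Finset (Fin a)).disjSum (T.biUnion B)).map e := by
      ext z
      simp only [hD, Finset.mem_biUnion, Finset.mem_map]
      constructor
      · rintro ⟨i, hi, w, hw, rfl⟩
        refine ⟨w, ?_, rfl⟩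
        rcases w with wa | wb
        · simp
        · simp only [Finset.inr_mem_disjSum] at hw ⊢
          exact Finset.mem_biUnion.mpr ⟨i, hi, hw⟩
      · rintro ⟨w, hw, rfl⟩
        rcases w with wa | wb
        · exact ⟨hT.choose, hT.choose_spec, Sum.inl wa, by simp, rfl⟩
        · simp only [Finset.inr_mem_disjSum, Finset.mem_biUnion] at hw
          obtain ⟨i, hi, hwb⟩ := hw
          exact ⟨i, hi, Sum.inr wb, by simp [hwb], rfl⟩
    rw [heq, Finset.card_map, Finset.card_disjSum, Finset.card_univ, Fintype.card_fin]
  refine ⟨D, fun T => ?_⟩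
  constructor
  · intro h
    by_contra hlt
    push_neg at hlt
    have hTc : T.card ≤ t - 1 := by omega
    have := hUB T
    have hmul : T.card * b ≤ (t - 1) * b := Nat.mul_le_mul_right b hTc
    omega
  · intro h
    obtain ⟨T', hT'sub, hT'card⟩ := Finset.exists_subset_card_eq h
    have hT'ne : T'.Nonempty := Finset.card_pos.mp (by omega)
    have hmono : (T'.biUnion D).card ≤ (T.biUnion D).card :=
      Finset.card_le_card (Finset.biUnion_subset_biUnion_of_subset_left D hT'sub)
    have hlow := card_biUnion_lower B b T' (fun i _ => (hBcard i).ge)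
      (fun i _ j _ hij => hBpair i j hij)
    rw [hT'card] at hlow
    have heq := hEQ T' hT'ne
    -- t' ≤ a + (T'.biUnion B).card
    have : t' ≤ (T'.biUnion D).card := by
      rw [heq]
      set X := t * b
      set Y := t * t
      set U := (T'.biUnion B).card
      omega
    omega


set_option maxHeartbeats 2000000 in
/-- If `t³ ≤ t' ≤ C·t³` for a constant `C ≥ 1`, then a `(t,n,t',n')`-distribution
design exists for every `n' ≥ 2e·C²·√n·t⁴`. -/
theorem distribution_design_cube_regime
    (C : ℝ) (hC : 1 ≤ C) (t t' : ℕ) (ht : 0 < t) (ht' : 0 < t')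
    (h₁ : (t:ℝ) ^ 3 ≤ (t':ℝ)) (h₂ : (t':ℝ) ≤ C * (t:ℝ) ^ 3) :
    ∀ n n' : ℕ, 0 < n →
      2 * Real.exp 1 * C ^ 2 * Real.sqrt (n:ℝ) * (t:ℝ) ^ 4 ≤ (n':ℝ) →
      ∃ D : Fin n → Finset (Fin n'), IsDistDesign t n t' n' D := by
  intro n n' hn hn'
  obtain ⟨u, rfl⟩ : ∃ u, t = u + 1 := ⟨t - 1, by omega⟩
  obtain ⟨r, hr⟩ := Nat.even_mul_succ_self u
  -- hr : u * (u + 1) = r + r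
  set b : ℕ := r + 1 with hbdef
  have hmul : u * (u + 1) = u * u + u := by ring
  have h2b : 2 * b = u * u + u + 2 := by omega
  have ht3 : (u + 1) ^ 3 ≤ t' := by exact_mod_cast h₁
  have ha_le : u * b + 1 ≤ t' := by
    have e1 : u * (2 * b) = u * (u * u + u + 2) := by rw [h2b]
    nlinarith [ht3, e1]
  set a : ℕ := t' - (u * b + 1) with hadef
  have haa : a + (u * b + 1) = t' := by omega
  set s : ℕ := Nat.sqrt (n - 1) + 1 with hsdef
  have hs : n ≤ s * s := by
    have h := Nat.lt_succ_sqrt (n - 1)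
    calc n = (n - 1) + 1 := by omega
      _ ≤ s * s := Nat.succ_le_of_lt h
  obtain ⟨q, hqp, hmq, hq2m⟩ := Nat.exists_prime_lt_and_le_two_mul (max b s) (by positivity)
  have hbq : b ≤ q := le_of_lt (lt_of_le_of_lt (le_max_left _ _) hmq)
  have hsq : s ≤ q := le_of_lt (lt_of_le_of_lt (le_max_right _ _) hmq)
  have hnq : n ≤ q * q := hs.trans (Nat.mul_le_mul hsq hsq)
  -- real number facts
  set S : ℝ := Real.sqrt n with hS
  have hSn : (1:ℝ) ≤ S := Real.one_le_sqrt.mpr (by exact_mod_cast hn)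
  have hsR : (s:ℝ) ≤ S + 1 := by
    have h1' : ((Nat.sqrt (n-1) : ℕ) : ℝ) ≤ Real.sqrt ((n-1 : ℕ) : ℝ) :=
      Real.nat_sqrt_le_real_sqrt
    have h2' : Real.sqrt ((n-1 : ℕ) : ℝ) ≤ S :=
      Real.sqrt_le_sqrt (by exact_mod_cast Nat.sub_le n 1)
    rw [hsdef]; push_cast; linarith
  have hexp : (5:ℝ) ≤ 2 * Real.exp 1 := by nlinarith [Real.exp_one_gt_d9]
  have ht'C : (t':ℝ) ≤ C * ((u:ℝ) + 1) ^ 3 := by push_cast at h₂ ⊢; linarith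
  have haR : (a:ℝ) + ((u:ℝ) * (b:ℝ) + 1) = (t':ℝ) := by exact_mod_cast haa
  have hn'' : 2 * Real.exp 1 * C ^ 2 * S * ((u:ℝ)+1) ^ 4 ≤ (n':ℝ) := by
    have h := hn'; push_cast at h; exact h
  -- the key cardinality bound
  have hcard : a + b * q ≤ n' := by
    have hgoalR : (a:ℝ) + (b:ℝ) * (q:ℝ) ≤ (n':ℝ) := by
      rcases Nat.eq_zero_or_pos u with hu | hu
      · -- t = 1
        subst hu
        have hb1 : b = 1 := by omega
        have hms : max b s = s := by rw [hb1]; omega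
        have hq2s : q ≤ 2 * s := by omega
        have hq1 : (q:ℝ) ≤ 2 * S + 2 := by
          have : (q:ℝ) ≤ 2 * (s:ℝ) := by exact_mod_cast hq2s
          linarith
        have ha1 : (a:ℝ) ≤ C - 1 := by
          have h0 : ((0:ℕ):ℝ) = 0 := by norm_num
          have ht'C' : (t':ℝ) ≤ C := by
            have := ht'C; rw [h0] at this; linarith [this]
          push_cast at haR
          linarith only [haR, ht'C']
        have key := dd_arith_one C S (a:ℝ) (q:ℝ) (2*Real.exp 1) hC hSn ha1 hq1 hexp
        have k4 : 2 * Real.exp 1 * (C^2 * S) ≤ (n':ℝ) := by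
          have heq : 2 * Real.exp 1 * (C^2 * S) =
              2 * Real.exp 1 * C^2 * S * (((0:ℕ):ℝ)+1)^4 := by norm_num; ring
          rw [heq]; exact hn''
        rw [hb1]; push_cast
        linarith only [key, k4]
      · -- t ≥ 2
        set T : ℝ := (u:ℝ) + 1 with hT
        have huR : (1:ℝ) ≤ (u:ℝ) := by exact_mod_cast hu
        have hT2 : (2:ℝ) ≤ T := by rw [hT]; linarith
        have hT0 : (0:ℝ) < T := by linarith
        have h2bR : 2 * (b:ℝ) = (u:ℝ) * (u:ℝ) + (u:ℝ) + 2 := by exact_mod_cast h2b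
        have hbR : 2 * (b:ℝ) ≤ T ^ 2 := by rw [hT]; nlinarith [h2bR, huR]
        have hb0 : (0:ℝ) ≤ (b:ℝ) := Nat.cast_nonneg b
        have hS0 : (0:ℝ) ≤ S := by linarith only [hSn]
        have hqR : (q:ℝ) ≤ 2 * (b:ℝ) + 2 * S + 2 := by
          have h1' : (q:ℝ) ≤ 2 * ((max b s : ℕ):ℝ) := by exact_mod_cast hq2m
          have h2' : ((max b s : ℕ) : ℝ) ≤ (b:ℝ) + (s:ℝ) := by
            exact_mod_cast Nat.max_le.mpr ⟨Nat.le_add_right b s, Nat.le_add_left s b⟩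
          linarith only [h1', h2', hsR]
        have haR2 : (a:ℝ) ≤ C * T^3 - 1 := by
          have hub0 : (0:ℝ) ≤ (u:ℝ) * (b:ℝ) := by positivity
          rw [hT] at ht'C ⊢
          linarith only [haR, ht'C, hub0]
        have key := dd_arith_main C S T (a:ℝ) (b:ℝ) (q:ℝ) (2*Real.exp 1)
          hC hSn hT2 hb0 hbR hqR haR2 hexp
        have k4 : 2 * Real.exp 1 * (C^2 * S * T^4) ≤ (n':ℝ) := by
          have heq : 2 * Real.exp 1 * (C^2 * S * T^4) =
              2 * Real.exp 1 * C^2 * S * T^4 := by ring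
          rw [heq]; exact hn''
        linarith only [key, k4]
    exact_mod_cast hgoalR
  -- numeric conditions for the core lemma
  have h1 : a + (u + 1 - 1) * b < t' := by
    simp only [Nat.add_sub_cancel]
    omega
  have h2 : 2 * t' + (u+1) * (u+1) ≤ 2 * a + 2 * ((u+1) * b) + (u+1) := by
    have e1 : (u+1) * (u+1) = u*u + 2*u + 1 := by ring
    have e2 : (u+1) * b = u*b + b := by ring
    omega
  exact exists_dist_design_core (u+1) t' n n' a b q hqp ht ht' hbq hnq hcard h1 h2
end
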